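/- arXiv:2107.03197 — 2 statements merged into one kernel-verified Lean document; each statement's English description precedes it below -/
import Mathlib

section
/- For the Somos-5 sequence (Sₙ) with S₀=...=S₄=1, the sequence of residues Sₙ mod 3 is periodic with period 16, and Sₙ ≡ 0 (mod 3) if and only if n ≡ 4 (mod 8). -/
/-- Pattern of Somos-5 residues mod 3: `pp i` is the residue of the classical
Somos-5 term with index `i` (five initial ones), i.e. of `S (i - 2)` below. -/
def pp : ℕ → ZMod 3 := fun i => [1,1,1,1,1,2,0,2,2,1,2,1,2,2,0,2].getD i 0

lemma finAfin : ∀ (m : Fin 16) (X : ZMod 3), (m:ℕ) % 8 ≠ 3 →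
    X * pp (((m:ℕ)+11)%16) =
      pp (((m:ℕ)+15)%16) * pp (((m:ℕ)+12)%16) + pp (((m:ℕ)+14)%16) * pp (((m:ℕ)+13)%16) →
    X = pp (m:ℕ) := by decide

lemma finBfin : ∀ (m : Fin 16) (X : ZMod 3), (m:ℕ) % 8 = 3 →
    pp (((m:ℕ)+10)%16) * pp (((m:ℕ)+13)%16) * X + pp (((m:ℕ)+11)%16) * pp (((m:ℕ)+14)%16)^2
      + pp (((m:ℕ)+12)%16)^2 * pp (((m:ℕ)+15)%16) =
      6 * (pp (((m:ℕ)+12)%16) * pp (((m:ℕ)+13)%16) * pp (((m:ℕ)+14)%16)) →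
    X = pp (m:ℕ) := by decide

lemma ppsymFin : ∀ (i j : Fin 16), ((i:ℕ) + (j:ℕ)) % 16 = 4 → pp (i:ℕ) = pp (j:ℕ) := by decide

lemma ppzeroFin : ∀ (i : Fin 16), (pp (i:ℕ) = 0 ↔ ((i:ℕ) = 6 ∨ (i:ℕ) = 14)) := by decide

/-- Induction step for the trilinear ("Somos-6 type") identity satisfied by
the Somos-5 sequence: `x0x3x6 + x1x4² + x2²x5 = 6·x2x3x4` propagates. -/
lemma Estep (x0 x1 x2 x3 x4 x5 x6 x7 : ℤ) (h2 : x2 ≠ 0)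
    (r0 : x5*x0 = x4*x1 + x3*x2) (r2 : x7*x2 = x6*x3 + x5*x4)
    (ih : x0*x3*x6 + x1*x4^2 + x2^2*x5 = 6*(x2*x3*x4)) :
    x1*x4*x7 + x2*x5^2 + x3^2*x6 = 6*(x3*x4*x5) := by
  have key : (x1*x4*x7 + x2*x5^2 + x3^2*x6 - 6*(x3*x4*x5)) * x2 = 0 := by
    linear_combination x5*ih - x3*x6*r0 + x1*x4*r2
  rcases mul_eq_zero.mp key with h | h
  · linarith
  · exact absurd h h2

/-- The Somos-5 sequence (Sₙ), indexed over ℤ symmetrically (S₋ₙ = Sₙ) with five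
adjacent initial ones, is periodic mod 3 with period 16, and 3 ∣ Sₙ iff
n ≡ 4 (mod 8). -/
theorem somos5_S_mod3 (S : ℤ → ℤ) (hsym : ∀ n : ℤ, S (-n) = S n)
    (h0 : S 0 = 1) (h1 : S 1 = 1) (h2 : S 2 = 1)
    (hrec : ∀ n : ℤ, S (n + 5) * S n = S (n + 4) * S (n + 1) + S (n + 3) * S (n + 2)) :
    (∀ n : ℤ, S (n + 16) % 3 = S n % 3) ∧ (∀ n : ℤ, S n % 3 = 0 ↔ n % 8 = 4) := by
  have hm1 : S (-1) = 1 := (hsym 1).trans h1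
  have hm2 : S (-2) = 1 := (hsym 2).trans h2
  have hv3 : S 3 = 2 := by
    have e := hrec (-2); norm_num at e; rw [hm2, h2, hm1, h1, h0] at e; omega
  have hv4 : S 4 = 3 := by
    have e := hrec (-1); norm_num at e; rw [hm1, h0, h2, h1, hv3] at e; omega
  have hv5 : S 5 = 5 := by
    have e := hrec 0; norm_num at e; rw [h0, h1, h2, hv3, hv4] at e; omega
  have hv6 : S 6 = 11 := by
    have e := hrec 1; norm_num at e; rw [h1, h2, hv3, hv4, hv5] at e; omega
  have hv7 : S 7 = 37 := by
    have e := hrec 2; norm_num at e; rw [h2, hv3, hv4, hv5, hv6] at e; omega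
  have hv8 : S 8 = 83 := by
    have e := hrec 3; norm_num at e; rw [hv3, hv4, hv5, hv6, hv7] at e; omega
  have hv9 : S 9 = 274 := by
    have e := hrec 4; norm_num at e; rw [hv4, hv5, hv6, hv7, hv8] at e; omega
  have hv10 : S 10 = 1217 := by
    have e := hrec 5; norm_num at e; rw [hv5, hv6, hv7, hv8, hv9] at e; omega
  have hv11 : S 11 = 6161 := by
    have e := hrec 6; norm_num at e; rw [hv6, hv7, hv8, hv9, hv10] at e; omega
  have hv12 : S 12 = 22833 := by
    have e := hrec 7; norm_num at e; rw [hv7, hv8, hv9, hv10, hv11] at e; omega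
  have hv13 : S 13 = 165713 := by
    have e := hrec 8; norm_num at e; rw [hv8, hv9, hv10, hv11, hv12] at e; omega
  -- all terms (from index -2 on) are positive
  have hpos : ∀ k : ℕ, 0 < S ((k:ℤ) - 2) := by
    intro k
    induction k using Nat.strong_induction_on with
    | _ k ih =>
      rcases lt_or_ge k 5 with hk | hk
      · interval_cases k <;> norm_num [hm2, hm1, h0, h1, h2]
      · have hq := hrec ((k:ℤ) - 7)
        rw [show (k:ℤ)-7+5 = (k:ℤ)-2 from by ring, show (k:ℤ)-7+4 = (k:ℤ)-3 from by ring,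
            show (k:ℤ)-7+3 = (k:ℤ)-4 from by ring, show (k:ℤ)-7+2 = (k:ℤ)-5 from by ring,
            show (k:ℤ)-7+1 = (k:ℤ)-6 from by ring] at hq
        have p1 := ih (k-1) (by omega); rw [show (((k-1:ℕ)):ℤ) - 2 = (k:ℤ)-3 from by omega] at p1
        have p2 := ih (k-2) (by omega); rw [show (((k-2:ℕ)):ℤ) - 2 = (k:ℤ)-4 from by omega] at p2
        have p3 := ih (k-3) (by omega); rw [show (((k-3:ℕ)):ℤ) - 2 = (k:ℤ)-5 from by omega] at p3
        have p4 := ih (k-4) (by omega); rw [show (((k-4:ℕ)):ℤ) - 2 = (k:ℤ)-6 from by omega] at p4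
        have p5 := ih (k-5) (by omega); rw [show (((k-5:ℕ)):ℤ) - 2 = (k:ℤ)-7 from by omega] at p5
        nlinarith [mul_pos p1 p4, mul_pos p2 p3]
  -- the trilinear identity
  have hEk : ∀ k : ℕ, S ((k:ℤ)-2) * S ((k:ℤ)+1) * S ((k:ℤ)+4) + S ((k:ℤ)-1) * S ((k:ℤ)+2)^2
      + S ((k:ℤ))^2 * S ((k:ℤ)+3) = 6 * (S ((k:ℤ)) * S ((k:ℤ)+1) * S ((k:ℤ)+2)) := by
    intro k
    induction k with
    | zero => norm_num [hm2, hm1, h0, h1, h2, hv3, hv4]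
    | succ k ihE =>
      push_cast
      rw [show (k:ℤ)+1-2 = (k:ℤ)-1 from by ring, show (k:ℤ)+1+1 = (k:ℤ)+2 from by ring,
          show (k:ℤ)+1+4 = (k:ℤ)+5 from by ring, show (k:ℤ)+1-1 = (k:ℤ) from by ring,
          show (k:ℤ)+1+2 = (k:ℤ)+3 from by ring, show (k:ℤ)+1+3 = (k:ℤ)+4 from by ring]
      have hne : S ((k:ℤ)) ≠ 0 := by
        have := hpos (k+2)
        rw [show (((k+2:ℕ)):ℤ) - 2 = (k:ℤ) from by omega] at this
        omega
      have r0 := hrec ((k:ℤ)-2)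
      rw [show (k:ℤ)-2+5 = (k:ℤ)+3 from by ring, show (k:ℤ)-2+4 = (k:ℤ)+2 from by ring,
          show (k:ℤ)-2+1 = (k:ℤ)-1 from by ring, show (k:ℤ)-2+3 = (k:ℤ)+1 from by ring,
          show (k:ℤ)-2+2 = (k:ℤ) from by ring] at r0
      have r2 := hrec ((k:ℤ))
      exact Estep (S ((k:ℤ)-2)) (S ((k:ℤ)-1)) (S ((k:ℤ))) (S ((k:ℤ)+1)) (S ((k:ℤ)+2))
        (S ((k:ℤ)+3)) (S ((k:ℤ)+4)) (S ((k:ℤ)+5)) hne r0 r2 ihE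
  -- residues mod 3 follow the period-16 pattern
  have hmodn : ∀ k : ℕ, ((S ((k:ℤ) - 2) : ℤ) : ZMod 3) = pp (k % 16) := by
    intro k
    induction k using Nat.strong_induction_on with
    | _ k ih =>
      rcases lt_or_ge k 16 with hk | hk
      · interval_cases k <;>
          norm_num [hm2, hm1, h0, h1, h2, hv3, hv4, hv5, hv6, hv7, hv8, hv9, hv10, hv11,
            hv12, hv13] <;>
          decide
      · have r3 := ih (k-1) (by omega)
        rw [show (((k-1:ℕ)):ℤ) - 2 = (k:ℤ)-3 from by omega,
            show (k-1) % 16 = (k%16 + 15) % 16 from by omega] at r3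
        have r4 := ih (k-2) (by omega)
        rw [show (((k-2:ℕ)):ℤ) - 2 = (k:ℤ)-4 from by omega,
            show (k-2) % 16 = (k%16 + 14) % 16 from by omega] at r4
        have r5 := ih (k-3) (by omega)
        rw [show (((k-3:ℕ)):ℤ) - 2 = (k:ℤ)-5 from by omega,
            show (k-3) % 16 = (k%16 + 13) % 16 from by omega] at r5
        have r6 := ih (k-4) (by omega)
        rw [show (((k-4:ℕ)):ℤ) - 2 = (k:ℤ)-6 from by omega,
            show (k-4) % 16 = (k%16 + 12) % 16 from by omega] at r6
        have r7 := ih (k-5) (by omega)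
        rw [show (((k-5:ℕ)):ℤ) - 2 = (k:ℤ)-7 from by omega,
            show (k-5) % 16 = (k%16 + 11) % 16 from by omega] at r7
        by_cases hA : k % 8 = 3
        · have r8 := ih (k-6) (by omega)
          rw [show (((k-6:ℕ)):ℤ) - 2 = (k:ℤ)-8 from by omega,
              show (k-6) % 16 = (k%16 + 10) % 16 from by omega] at r8
          have hq := hEk (k-6)
          rw [show (((k-6:ℕ)):ℤ) = (k:ℤ)-6 from by omega] at hq
          rw [show (k:ℤ)-6-2 = (k:ℤ)-8 from by ring, show (k:ℤ)-6+1 = (k:ℤ)-5 from by ring,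
              show (k:ℤ)-6+4 = (k:ℤ)-2 from by ring, show (k:ℤ)-6-1 = (k:ℤ)-7 from by ring,
              show (k:ℤ)-6+2 = (k:ℤ)-4 from by ring, show (k:ℤ)-6+3 = (k:ℤ)-3 from by ring] at hq
          have hq3 := congrArg (fun z : ℤ => (z : ZMod 3)) hq
          push_cast at hq3
          rw [r3, r4, r5, r6, r7, r8] at hq3
          exact finBfin ⟨k % 16, by omega⟩ _ (by show k % 16 % 8 = 3; omega) hq3
        · have hq := hrec ((k:ℤ) - 7)
          rw [show (k:ℤ)-7+5 = (k:ℤ)-2 from by ring, show (k:ℤ)-7+4 = (k:ℤ)-3 from by ring,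
              show (k:ℤ)-7+3 = (k:ℤ)-4 from by ring, show (k:ℤ)-7+2 = (k:ℤ)-5 from by ring,
              show (k:ℤ)-7+1 = (k:ℤ)-6 from by ring] at hq
          have hq3 := congrArg (fun z : ℤ => (z : ZMod 3)) hq
          push_cast at hq3
          rw [r3, r4, r5, r6, r7] at hq3
          exact finAfin ⟨k % 16, by omega⟩ _ (by show k % 16 % 8 ≠ 3; omega) hq3
  -- master description of all residues
  have master : ∀ n : ℤ, ((S n : ℤ) : ZMod 3) = pp (((n + 2) % 16).toNat) := by
    intro n
    rcases le_or_gt (-2) n with hn | hn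
    · have h := hmodn (n + 2).toNat
      rw [show (((n+2).toNat : ℕ) : ℤ) - 2 = n from by omega,
          show (n+2).toNat % 16 = ((n+2) % 16).toNat from by omega] at h
      exact h
    · have h := hmodn (2 - n).toNat
      rw [show (((2-n).toNat : ℕ) : ℤ) - 2 = -n from by omega,
          show (2-n).toNat % 16 = ((2-n) % 16).toNat from by omega, hsym n] at h
      rw [h]
      exact ppsymFin ⟨((2-n) % 16).toNat, by omega⟩ ⟨((n+2) % 16).toNat, by omega⟩
        (by show (((2-n) % 16).toNat + ((n+2) % 16).toNat) % 16 = 4; omega)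
  constructor
  · intro n
    have a := master (n + 16)
    have b := master n
    rw [show (n + 16 + 2) % 16 = (n + 2) % 16 from by omega] at a
    have hab : ((S (n+16) : ℤ) : ZMod 3) = ((S n : ℤ) : ZMod 3) := a.trans b.symm
    exact (ZMod.intCast_eq_intCast_iff _ _ _).mp hab
  · intro n
    have a := master n
    constructor
    · intro h
      have hz : ((S n : ℤ) : ZMod 3) = 0 := by
        rw [ZMod.intCast_zmod_eq_zero_iff_dvd]
        exact_mod_cast Int.dvd_of_emod_eq_zero h
      rw [a] at hz
      have h6 : ((n+2) % 16).toNat = 6 ∨ ((n+2) % 16).toNat = 14 :=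
        (ppzeroFin ⟨((n+2) % 16).toNat, by omega⟩).mp hz
      omega
    · intro h
      have hz : pp (((n+2) % 16).toNat) = 0 := by
        apply (ppzeroFin ⟨((n+2) % 16).toNat, by omega⟩).mpr
        show ((n+2) % 16).toNat = 6 ∨ ((n+2) % 16).toNat = 14
        omega
      rw [hz] at a
      have hd : (3:ℤ) ∣ S n := by exact_mod_cast (ZMod.intCast_zmod_eq_zero_iff_dvd _ _).mp a
      omega
end

section
/- Suppose sequences (uₙ) of nonzero rationals satisfy uₙ₊₁uₙ₋₁ = 1 + 1/uₙ for all n. Then the quantity J(u,v) = u + v + 1/u + 1/v + 1/(uv) is invariant: J(uₙ₋₁, uₙ) = J(uₙ, uₙ₊₁) for all n. -/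
/-! The difference `J(u, v) - J(v, w)` factors as `(u - w) (u w - 1 - 1/v) / (u w)`, and the
recurrence says precisely that the second factor vanishes along the orbit. -/

section QRT

variable {K : Type*} [Field K]

def qrtInvariant (u v : K) : K :=
  u + v + 1 / u + 1 / v + 1 / (u * v)

theorem qrtInvariant_sub {u v w : K} (hu : u ≠ 0) (hv : v ≠ 0) (hw : w ≠ 0) :
    qrtInvariant u v - qrtInvariant v w = (u - w) * (u * w - (1 + 1 / v)) / (u * w) := by
  unfold qrtInvariant
  field_simp
  ring

theorem qrtInvariant_eq_of_mul_eq {u v w : K} (hu : u ≠ 0) (hv : v ≠ 0) (hw : w ≠ 0)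
    (hrec : w * u = 1 + 1 / v) : qrtInvariant u v = qrtInvariant v w := by
  rw [← sub_eq_zero, qrtInvariant_sub hu hv hw, mul_comm u w, hrec, sub_self, mul_zero,
    zero_div]

end QRT

/-- The quantity J(u,v) = u + v + 1/u + 1/v + 1/(uv) is conserved by the QRT
recurrence uₙ₊₁uₙ₋₁ = 1 + 1/uₙ. -/
theorem qrt_conserved (u : ℤ → ℚ) (hne : ∀ n, u n ≠ 0)
    (hrec : ∀ n : ℤ, u (n + 1) * u (n - 1) = 1 + 1 / u n) :
    ∀ n : ℤ,
      u (n - 1) + u n + 1 / u (n - 1) + 1 / u n + 1 / (u (n - 1) * u n) =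
      u n + u (n + 1) + 1 / u n + 1 / u (n + 1) + 1 / (u n * u (n + 1)) := fun n =>
  qrtInvariant_eq_of_mul_eq (hne (n - 1)) (hne n) (hne (n + 1)) (hrec n)
end
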